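/- Assume (Zhang-type hypothesis) that for every integer q ≥ 1 coprime to the product h_1···h_k of an admissible tuple H = {h_1, ..., h_k}, there exist infinitely many n such that {qn + h_1, ..., qn + h_k} contains at least two primes. Then for any admissible set H and any m ≥ 1, the set m·σ(H) = {m(h_j − h_i) : h_i < h_j, h_i, h_j ∈ H} contains a Polignac number, i.e., an even number d such that p_{n+1} − p_n = d for infinitely many n. -/

import Mathlib

/-- A finite set of natural numbers is admissible if for every prime `p`, its
elements occupy fewer than `p` residue classes modulo `p`. -/
def AdmissibleN (H : Finset ℕ) : Prop :=
  ∀ p : ℕ, p.Prime → (H.image (Nat.cast : ℕ → ZMod p)).card < p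

/-- A Polignac number: a positive even number occurring infinitely often as a
gap between consecutive primes. -/
def PolignacNumber (d : ℕ) : Prop :=
  0 < d ∧ Even d ∧
    {n : ℕ | Nat.nth Nat.Prime (n + 1) - Nat.nth Nat.Prime n = d}.Infinite

/-!
Replace `H` by the shifted tuple `T = a + m·H`. Take `q` to be a product of distinct
primes `p_s > m·max H`, one for each `s ≤ m·max H` outside `m·H`, and choose `a` by the
Chinese remainder theorem with `p_s ∣ a + s`. Then `q` is coprime to every element of `T`,
so the hypothesis applies to `T` and `q`; and for `n ≥ 1` every `qn + a + s` with `s` as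
above is composite. Hence whenever `qn + T` contains two primes, its two smallest primes are
consecutive primes, and they differ by an element of `m·σ(H)`. By pigeonhole one such
difference occurs for infinitely many `n`; as a gap between odd primes it is even.
-/

open Filter Finset Function

def ConsecutivePrimes (p p' : ℕ) : Prop :=
  p.Prime ∧ p'.Prime ∧ p < p' ∧ ∀ u, p < u → u < p' → ¬ u.Prime

theorem ConsecutivePrimes.nth_count_add_one {p p' : ℕ} (h : ConsecutivePrimes p p') :
    Nat.nth Nat.Prime (Nat.count Nat.Prime p + 1) = p' := by
  obtain ⟨hp, hp', hlt, hgap⟩ := h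
  rw [← Nat.count_succ_eq_succ_count hp, Nat.nth_count_eq_sInf]
  refine le_antisymm (Nat.sInf_le ⟨hp', hlt⟩) (le_csInf ⟨p', hp', hlt⟩ ?_)
  rintro u ⟨hu, hpu⟩
  by_contra! hup
  exact hgap u hpu hup hu

theorem polignacNumber_of_frequently {d : ℕ}
    (h : ∃ᶠ p in atTop, ConsecutivePrimes p (p + d)) : PolignacNumber d := by
  obtain ⟨p, ⟨hp, hpd, hlt, -⟩, h2p⟩ := (h.and_eventually (eventually_gt_atTop 2)).exists
  refine ⟨by omega, ?_, ?_⟩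
  · simpa using Nat.Odd.sub_odd (hpd.odd_of_ne_two (by omega)) (hp.odd_of_ne_two h2p.ne')
  · refine ((Nat.frequently_atTop_iff_infinite.1 h).image
      fun p hp p' hp' heq => Nat.count_injective hp.1 hp'.1 heq).mono ?_
    rintro _ ⟨p, hp, rfl⟩
    simp [hp.nth_count_add_one, Nat.nth_count hp.1]

theorem AdmissibleN.image_add_mul {H : Finset ℕ} (hH : AdmissibleN H) (a m : ℕ) :
    AdmissibleN (H.image (a + m * ·)) := by
  intro p hp
  have : (H.image (a + m * ·)).image (Nat.cast : ℕ → ZMod p)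
      = (H.image (Nat.cast : ℕ → ZMod p)).image ((a : ZMod p) + m * ·) := by
    simp only [image_image]
    exact image_congr fun h _ => by simp
  rw [this]
  exact (card_image_le).trans_lt (hH p hp)

theorem Nat.exists_pos_add_dvd {ι : Type*} (S : Finset ι) (f r : ι → ℕ)
    (hf : ∀ i ∈ S, f i ≠ 0) (hco : Set.Pairwise S (Coprime on f)) :
    ∃ a, 0 < a ∧ ∀ i ∈ S, f i ∣ a + r i := by
  -- the residue `(f i - 1) * r i` is `-r i` modulo `f i`, written without subtraction
  obtain ⟨a, ha⟩ := Nat.chineseRemainderOfFinset (fun i => (f i - 1) * r i) f S hf hco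
  refine ⟨a + ∏ i ∈ S, f i, by have := prod_ne_zero_iff.2 hf; omega, fun i hi => ?_⟩
  rw [add_right_comm, Nat.dvd_add_left (dvd_prod_of_mem f hi)]
  have : (f i - 1) * r i + r i = f i * r i := by
    rw [Nat.sub_one_mul,
      Nat.sub_add_cancel (Nat.le_mul_of_pos_left _ (Nat.pos_of_ne_zero (hf i hi)))]
  exact Nat.modEq_zero_iff_dvd.1 (((ha i hi).add_right (r i)).trans (by
    rw [this]; exact Nat.modEq_zero_iff_dvd.2 (dvd_mul_right _ _)))

theorem Nat.eq_of_dvd_add_of_lt {p a s t : ℕ} (hs : p ∣ a + s) (ht : p ∣ a + t) (hsp : s < p)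
    (htp : t < p) : s = t :=
  (Nat.ModEq.add_left_cancel' a ((Nat.modEq_zero_iff_dvd.2 hs).trans
    (Nat.modEq_zero_iff_dvd.2 ht).symm)).eq_of_lt_of_lt hsp htp

def NoPrimeInGaps (T : Finset ℕ) (x : ℕ) : Prop :=
  ∀ t ∈ T, ∀ t' ∈ T, ∀ u, t < u → u < t' → u ∉ T → ¬ (x + u).Prime

theorem NoPrimeInGaps.exists_consecutivePrimes {T : Finset ℕ} {x : ℕ} (hT : NoPrimeInGaps T x)
    (h2 : 2 ≤ #(T.filter fun t => (x + t).Prime)) :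
    ∃ t ∈ T, ∃ t' ∈ T, t < t' ∧ ConsecutivePrimes (x + t) (x + t') := by
  set O := T.filter fun t => (x + t).Prime
  have hO : O.Nonempty := card_pos.1 (by omega)
  have hO' : (O.erase (O.min' hO)).Nonempty :=
    card_pos.1 (by rw [card_erase_of_mem (O.min'_mem hO)]; omega)
  set t := O.min' hO
  set t' := (O.erase t).min' hO'
  have ht : t ∈ O := O.min'_mem hO
  have ht' : t' ∈ O.erase t := (O.erase t).min'_mem hO'
  have hlt : t < t' := (O.min'_le _ (mem_of_mem_erase ht')).lt_of_ne (ne_of_mem_erase ht').symm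
  simp only [O, mem_erase, mem_filter] at ht ht'
  refine ⟨t, ht.1, t', ht'.2.1, hlt, ht.2, ht'.2.2, by omega, fun u htu hut hu => ?_⟩
  obtain ⟨w, rfl⟩ : ∃ w, u = x + w := ⟨u - x, by omega⟩
  by_cases hw : w ∈ T
  · have := (O.erase t).min'_le w (mem_erase.2 ⟨by omega, mem_filter.2 ⟨hw, hu⟩⟩)
    omega
  · exact hT t ht.1 t' ht'.2.1 w (by omega) (by omega) hw hu

theorem exists_shift_sieving {B : ℕ} {S : Finset ℕ} (hS : ∀ s ∈ S, s ≤ B) :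
    ∃ q a : ℕ, 0 < q ∧ 0 < a ∧
      (∀ s ∈ S, ∀ n, 0 < n → ¬ (q * n + (a + s)).Prime) ∧
      ∀ t ≤ B, t ∉ S → Nat.Coprime q (a + t) := by
  set f : ℕ → ℕ := fun s => Nat.nth Nat.Prime (B + 1 + s)
  have hf : ∀ s, (f s).Prime := fun s => Nat.prime_nth_prime _
  have hmono := Nat.nth_strictMono Nat.infinite_setOfPred_prime
  have hBf : ∀ s, B + s < f s := fun s => (by omega : B + s < B + 1 + s).trans_le hmono.le_apply
  obtain ⟨a, ha, hdvd⟩ : ∃ a, 0 < a ∧ ∀ s ∈ S, f s ∣ a + s :=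
    Nat.exists_pos_add_dvd S f id (fun s _ => (hf s).ne_zero)
      fun s _ t _ hst => (Nat.coprime_primes (hf s) (hf t)).2
        fun h => hst (by simpa using hmono.injective h)
  have hq : 0 < ∏ s ∈ S, f s := prod_pos fun s _ => (hf s).pos
  refine ⟨∏ s ∈ S, f s, a, hq, ha, fun s hs n hn => ?_, fun t ht htS => ?_⟩
  · have hfq : f s ∣ ∏ s ∈ S, f s := dvd_prod_of_mem f hs
    refine Nat.not_prime_of_dvd_of_lt (dvd_add (hfq.mul_right n) (hdvd s hs)) (hf s).two_le ?_
    calc f s ≤ ∏ s ∈ S, f s := Nat.le_of_dvd hq hfq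
      _ ≤ (∏ s ∈ S, f s) * n := Nat.le_mul_of_pos_right _ hn
      _ < (∏ s ∈ S, f s) * n + (a + s) := by omega
  · refine Nat.Coprime.prod_left fun s hs => (hf s).coprime_iff_not_dvd.2 fun h => htS ?_
    have := hBf s
    have := hS s hs
    rwa [Nat.eq_of_dvd_add_of_lt h (hdvd s hs) (by omega) (by omega)]

theorem exists_shift_noPrimeInGaps (T : Finset ℕ) :
    ∃ q a : ℕ, 0 < q ∧ 0 < a ∧ Nat.Coprime q (∏ t ∈ T.image (a + ·), t) ∧
      ∀ n, 0 < n → NoPrimeInGaps (T.image (a + ·)) (q * n) := by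
  obtain ⟨q, a, hq, ha, hcomp, hcop⟩ :=
    exists_shift_sieving (B := T.sup id) (S := (range (T.sup id + 1)).filter (· ∉ T))
      fun s hs => by simp only [mem_filter, mem_range] at hs; omega
  refine ⟨q, a, hq, ha, ?_, fun n hn => ?_⟩
  · rw [prod_image fun _ _ _ _ => Nat.add_left_cancel]
    exact Nat.Coprime.prod_right fun t ht =>
      hcop t (le_sup (f := id) ht) fun h => (mem_filter.1 h).2 ht
  · rintro _ ht _ ht' u htu hut hu
    obtain ⟨t, -, rfl⟩ := mem_image.1 ht
    obtain ⟨t', ht'T, rfl⟩ := mem_image.1 ht'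
    obtain ⟨s, rfl⟩ : ∃ s, u = a + s := ⟨u - a, by omega⟩
    have : t' ≤ T.sup id := le_sup (f := id) ht'T
    exact hcomp s (mem_filter.2 ⟨mem_range.2 (by omega), fun hs => hu (mem_image_of_mem _ hs)⟩)
      n hn

theorem polignac_in_m_sigma_general
    (zhang : ∀ H : Finset ℕ, (∀ h ∈ H, 0 < h) → AdmissibleN H →
      ∀ q : ℕ, 1 ≤ q → Nat.Coprime q (∏ h ∈ H, h) →
        {n : ℕ | 2 ≤ (H.filter (fun h => Nat.Prime (q * n + h))).card}.Infinite)
    (H : Finset ℕ) (hH : AdmissibleN H) (m : ℕ) :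
    ∃ hi ∈ H, ∃ hj ∈ H, hi < hj ∧ PolignacNumber (m * (hj - hi)) := by
  obtain ⟨q, a, hq, ha, hcop, hgaps⟩ := exists_shift_noPrimeInGaps (H.image (m * ·))
  set T := (H.image (m * ·)).image (a + ·)
  have hTpos : ∀ t ∈ T, 0 < t := by simp only [T, mem_image]; omega
  have hTadm : AdmissibleN T := by
    simp only [T, image_image]; exact hH.image_add_mul a m
  have key : ∃ᶠ n in atTop, ∃ c ∈ H ×ˢ H, c.1 < c.2 ∧
      ConsecutivePrimes (q * n + (a + m * c.1)) (q * n + (a + m * c.2)) := by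
    refine ((Nat.frequently_atTop_iff_infinite.2 (zhang T hTpos hTadm q hq hcop)).and_eventually
      (eventually_gt_atTop 0)).mono fun n ⟨h2, hn⟩ => ?_
    obtain ⟨_, ht, _, ht', hlt, hcons⟩ := (hgaps n hn).exists_consecutivePrimes h2
    obtain ⟨_, hs, rfl⟩ := mem_image.1 ht
    obtain ⟨hi, hhi, rfl⟩ := mem_image.1 hs
    obtain ⟨_, hs', rfl⟩ := mem_image.1 ht'
    obtain ⟨hj, hhj, rfl⟩ := mem_image.1 hs'
    exact ⟨(hi, hj), mem_product.2 ⟨hhi, hhj⟩,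
      show hi < hj from Nat.lt_of_mul_lt_mul_left (a := m) (by omega), hcons⟩
  obtain ⟨⟨hi, hj⟩, hc, hpair⟩ := (frequently_exists_finset _).1 key
  obtain ⟨n, hlt, -⟩ := hpair.exists
  refine ⟨hi, (mem_product.1 hc).1, hj, (mem_product.1 hc).2, hlt,
    polignacNumber_of_frequently ?_⟩
  have hgap : m * hi + m * (hj - hi) = m * hj := by rw [← Nat.mul_add, Nat.add_sub_cancel' hlt.le]
  have hshift : Tendsto (fun n => q * n + (a + m * hi)) atTop atTop :=
    tendsto_atTop_mono (fun n => (Nat.le_mul_of_pos_left n hq).trans (le_add_right le_rfl))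
      tendsto_id
  refine hshift.frequently (hpair.mono fun n ⟨_, hcons⟩ => ?_)
  rwa [show q * n + (a + m * hi) + m * (hj - hi) = q * n + (a + m * hj) by omega]

theorem polignac_in_m_sigma
    (zhang : ∀ H : Finset ℕ, (∀ h ∈ H, 0 < h) → AdmissibleN H →
      ∀ q : ℕ, 1 ≤ q → Nat.Coprime q (∏ h ∈ H, h) →
        {n : ℕ | 2 ≤ (H.filter (fun h => Nat.Prime (q * n + h))).card}.Infinite)
    (H : Finset ℕ) (hpos : ∀ h ∈ H, 0 < h) (hH : AdmissibleN H)
    (hcard : 2 ≤ H.card) (m : ℕ) (hm : 1 ≤ m) :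
    ∃ hi ∈ H, ∃ hj ∈ H, hi < hj ∧ PolignacNumber (m * (hj - hi)) :=
  polignac_in_m_sigma_general zhang H hH m
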